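/- Let G be a connected non-complete 2K2-free simple graph and let S be a minimal vertex separator of G. Then at most one connected component of G − S is non-trivial, i.e., at most one component of G − S has more than one vertex. -/

import Mathlib

/-!
Two edges lying in different components of `G − S` span an induced `2K₂`: distinct components
are vertex-disjoint and no edge of `G` joins them.
-/

open SimpleGraph

/-- A simple graph is `2K₂`-free: there are no four pairwise distinct vertices `a b c d`
with `ab` and `cd` edges and none of `ac, ad, bc, bd` an edge. -/
def TwoK2Free {V : Type*} (G : SimpleGraph V) : Prop :=
  ¬ ∃ a b c d : V, a ≠ b ∧ a ≠ c ∧ a ≠ d ∧ b ≠ c ∧ b ≠ d ∧ c ≠ d ∧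
    G.Adj a b ∧ G.Adj c d ∧ ¬ G.Adj a c ∧ ¬ G.Adj a d ∧ ¬ G.Adj b c ∧ ¬ G.Adj b d

/-- `S ⊊ V(G)` is a vertex separator: deleting `S` leaves a disconnected graph. -/
def IsSeparator {V : Type*} (G : SimpleGraph V) (S : Set V) : Prop :=
  S ≠ Set.univ ∧ ¬ (G.induce (Sᶜ : Set V)).Connected

/-- A minimal vertex separator: no proper subset is a separator. -/
def IsMinSeparator {V : Type*} (G : SimpleGraph V) (S : Set V) : Prop :=
  IsSeparator G S ∧ ∀ S' : Set V, S' ⊂ S → ¬ IsSeparator G S'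

/-- A connected component is trivial if its support is a single vertex. -/
def IsTrivialComp {α : Type*} {H : SimpleGraph α} (C : H.ConnectedComponent) : Prop :=
  ∃ v, C.supp = {v}

section

variable {V W : Type*} {G : SimpleGraph V}

namespace SimpleGraph.ConnectedComponent

theorem exists_adj_of_not_isTrivialComp {C : G.ConnectedComponent} (hC : ¬ IsTrivialComp C) :
    ∃ a b, a ∈ C.supp ∧ b ∈ C.supp ∧ G.Adj a b := by
  obtain ⟨v, hv⟩ := C.nonempty_supp
  obtain ⟨w, hw, hwv⟩ : ∃ w ∈ C.supp, w ≠ v := by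
    by_contra! h
    exact hC ⟨v, Set.eq_singleton_iff_unique_mem.2 ⟨hv, h⟩⟩
  obtain ⟨u, hu⟩ := (C.reachable_of_mem_supp hv hw).nonempty_neighborSet_left hwv.symm
  exact ⟨v, u, hv, C.mem_supp_of_adj_mem_supp hv hu, hu⟩

variable {C D : G.ConnectedComponent} {x y : V}

theorem ne_of_mem_supp_of_ne (hCD : C ≠ D) (hx : x ∈ C.supp) (hy : y ∈ D.supp) : x ≠ y :=
  fun hxy => hCD (eq_of_common_vertex hx (hxy ▸ hy))

theorem not_adj_of_mem_supp_of_ne (hCD : C ≠ D) (hx : x ∈ C.supp) (hy : y ∈ D.supp) :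
    ¬ G.Adj x y :=
  fun hxy => hCD (eq_of_common_vertex (C.mem_supp_of_adj_mem_supp hx hxy) hy)

end SimpleGraph.ConnectedComponent

namespace TwoK2Free

theorem of_embedding {H : SimpleGraph W} (hG : TwoK2Free G) (f : H ↪g G) : TwoK2Free H := by
  rintro ⟨a, b, c, d, hab, hac, had, hbc, hbd, hcd, hab', hcd', hac', had', hbc', hbd'⟩
  exact hG ⟨f a, f b, f c, f d, f.injective.ne hab, f.injective.ne hac, f.injective.ne had,
    f.injective.ne hbc, f.injective.ne hbd, f.injective.ne hcd, f.map_adj_iff.2 hab',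
    f.map_adj_iff.2 hcd', mt f.map_adj_iff.1 hac', mt f.map_adj_iff.1 had',
    mt f.map_adj_iff.1 hbc', mt f.map_adj_iff.1 hbd'⟩

theorem induce (hG : TwoK2Free G) (s : Set V) : TwoK2Free (G.induce s) :=
  hG.of_embedding (Embedding.induce s)

theorem eq_of_not_isTrivialComp (hG : TwoK2Free G) {C D : G.ConnectedComponent}
    (hC : ¬ IsTrivialComp C) (hD : ¬ IsTrivialComp D) : C = D := by
  by_contra hCD
  obtain ⟨a, b, ha, hb, hab⟩ := C.exists_adj_of_not_isTrivialComp hC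
  obtain ⟨c, d, hc, hd, hcd⟩ := D.exists_adj_of_not_isTrivialComp hD
  have ne {x y : V} : x ∈ C.supp → y ∈ D.supp → x ≠ y :=
    ConnectedComponent.ne_of_mem_supp_of_ne hCD
  have nadj {x y : V} : x ∈ C.supp → y ∈ D.supp → ¬ G.Adj x y :=
    ConnectedComponent.not_adj_of_mem_supp_of_ne hCD
  exact hG ⟨a, b, c, d, hab.ne, ne ha hc, ne ha hd, ne hb hc, ne hb hd, hcd.ne, hab, hcd,
    nadj ha hc, nadj ha hd, nadj hb hc, nadj hb hd⟩

end TwoK2Free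

end

theorem atMostOne_nontrivial_component {V : Type*} (G : SimpleGraph V)
    (h2k2 : TwoK2Free G) (S : Set V) :
    ∀ C D : (G.induce (Sᶜ : Set V)).ConnectedComponent,
      ¬ IsTrivialComp C → ¬ IsTrivialComp D → C = D :=
  fun _ _ hC hD => (h2k2.induce Sᶜ).eq_of_not_isTrivialComp hC hD
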